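/- There exist three orthogonal projections P₁, P₂, P₃ of rank one in M₂(ℂ) such that P₁ + P₂ + P₃ = (3/2)·I, Tr(σ₃ P_i) = 0 for i = 1, 2, 3, and Tr(P_i P_j) = 1/4 for all i ≠ j, where σ₃ is the Pauli matrix diag(1, −1). -/

import Mathlib

/-!
For a unit complex number `z`, the projection onto the line through `(1, z)` has Bloch vector
`(Re z, Im z, 0)` on the equator, so it is quasi-orthogonal to `σ₃`. Taking `z` among the three
cube roots of unity makes the projections sum to `(3/2)·I` (as `1 + ω + ω² = 0`), and any two
overlap with `Tr(P_i P_j) = (1 + Re(z̄_i z_j))/2 = 1/4`, since `z_i + z_j = -z_k` is again a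
unit vector.
-/

open Matrix ComplexConjugate

lemma Complex.conj_mul_self_of_norm_eq_one {z : ℂ} (hz : ‖z‖ = 1) : conj z * z = 1 := by
  rw [Complex.conj_mul', hz]
  norm_num

/-- Equals `v vᴴ` for `v = (1, z)/√2` when `‖z‖ = 1`. -/
noncomputable def equatorProj (z : ℂ) : Matrix (Fin 2) (Fin 2) ℂ :=
  !![1 / 2, conj z / 2; z / 2, 1 / 2]

lemma equatorProj_conjTranspose (z : ℂ) : (equatorProj z)ᴴ = equatorProj z := by
  ext a b
  fin_cases a <;> fin_cases b <;> simp [equatorProj, conjTranspose_apply]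

lemma trace_equatorProj (z : ℂ) : (equatorProj z).trace = 1 := by
  rw [equatorProj, trace_fin_two_of]
  norm_num

lemma trace_sigma3_mul_equatorProj (z : ℂ) :
    ((!![1, 0; 0, -1] : Matrix (Fin 2) (Fin 2) ℂ) * equatorProj z).trace = 0 := by
  rw [equatorProj, mul_fin_two, trace_fin_two_of]
  ring

lemma trace_equatorProj_mul (z w : ℂ) :
    (equatorProj z * equatorProj w).trace = (2 + conj z * w + conj w * z) / 4 := by
  rw [equatorProj, equatorProj, mul_fin_two, trace_fin_two_of]
  ring

lemma equatorProj_mul_self {z : ℂ} (hz : ‖z‖ = 1) :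
    equatorProj z * equatorProj z = equatorProj z := by
  have h := Complex.conj_mul_self_of_norm_eq_one hz
  rw [equatorProj, mul_fin_two]
  congr 1
  simp only [vecCons_inj, and_true]
  refine ⟨⟨?_, by ring⟩, by ring, ?_⟩ <;> linear_combination h / 4

/-- `|z + w|² = 1` for unit `z, w` says `2 Re (z̄ w) = -1`. -/
lemma trace_equatorProj_mul_of_norm_add {z w : ℂ} (hz : ‖z‖ = 1) (hw : ‖w‖ = 1)
    (hzw : ‖z + w‖ = 1) : (equatorProj z * equatorProj w).trace = 1 / 4 := by
  have h := Complex.conj_mul_self_of_norm_eq_one hzw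
  rw [map_add] at h
  rw [trace_equatorProj_mul]
  linear_combination (h - Complex.conj_mul_self_of_norm_eq_one hz
    - Complex.conj_mul_self_of_norm_eq_one hw) / 4

lemma sum_equatorProj {ι : Type*} [Fintype ι] {z : ι → ℂ} (h : ∑ i, z i = 0) :
    ∑ i, equatorProj (z i) = (Fintype.card ι / 2 : ℂ) • 1 := by
  have h' : ∑ i, conj (z i) = 0 := by rw [← map_sum, h, map_zero]
  ext a b
  rw [Matrix.sum_apply]
  fin_cases a <;> fin_cases b <;> simp [equatorProj, ← Finset.sum_div, h, h'] <;> ring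

lemma Fin.exists_add_eq_neg_of_sum_eq_zero {M : Type*} [AddCommGroup M] {z : Fin 3 → M}
    (h : ∑ l, z l = 0) {i j : Fin 3} (hij : i ≠ j) : ∃ k, z i + z j = -z k := by
  refine ⟨-(i + j), ?_⟩
  rw [Fin.sum_univ_three] at h
  rw [eq_neg_iff_add_eq_zero, ← h]
  fin_cases i <;> fin_cases j <;> first | exact absurd rfl hij | (simp; abel)

theorem exists_conditional_sic_qubit :
    ∃ P : Fin 3 → Matrix (Fin 2) (Fin 2) ℂ,
      (∀ i, (P i)ᴴ = P i) ∧ (∀ i, P i * P i = P i) ∧ (∀ i, (P i).trace = 1) ∧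
      (∑ i, P i = (3 / 2 : ℂ) • 1) ∧
      (∀ i, ((!![1, 0; 0, -1] : Matrix (Fin 2) (Fin 2) ℂ) * P i).trace = 0) ∧
      (∀ i j, i ≠ j → (P i * P j).trace = 1 / 4) := by
  obtain ⟨ω, hω⟩ : ∃ ω : ℂ, IsPrimitiveRoot ω 3 :=
    ⟨_, Complex.isPrimitiveRoot_exp 3 (by norm_num)⟩
  set z : Fin 3 → ℂ := fun i => ω ^ (i : ℕ)
  have hz (i : Fin 3) : ‖z i‖ = 1 := by simp [z, hω.norm'_eq_one (by norm_num)]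
  have hsum : ∑ i, z i = 0 := by
    rw [Fin.sum_univ_eq_sum_range (ω ^ ·)]
    exact hω.geom_sum_eq_zero (by norm_num)
  refine ⟨fun i => equatorProj (z i), fun i => equatorProj_conjTranspose _,
    fun i => equatorProj_mul_self (hz i), fun i => trace_equatorProj _, ?_,
    fun i => trace_sigma3_mul_equatorProj _, fun i j hij => ?_⟩
  · rw [sum_equatorProj hsum]
    norm_num
  · obtain ⟨k, hk⟩ := Fin.exists_add_eq_neg_of_sum_eq_zero hsum hij
    exact trace_equatorProj_mul_of_norm_add (hz i) (hz j) (by rw [hk, norm_neg, hz k])
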